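/- arXiv:2605.24490 — 2 statements merged into one kernel-verified Lean document; each statement's English description precedes it below -/
import Mathlib

section
/- Let h > 0, let t ≥ 1 be a natural number, let 1 ≤ n₀ ≤ t, and let M ≥ 0. Let R, R' : {1,…,t} → ℝ be two return histories with |R_τ| ≤ M and |R'_τ| ≤ M for all τ, and R_τ = R'_τ for all τ > n₀. Then the EWP weighted means μ(R) = (Σ_{τ=1}^{t} w_τ R_τ)/(Σ_{τ=1}^{t} w_τ) and μ(R') (with w_τ = exp(−(t−τ)/h)) satisfy |μ(R) − μ(R')| ≤ 2M·exp(−(t−n₀)/h). -/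
/-- **EWP weighted mean: cold-start perturbation bound.**
If two bounded return histories `R, R'` (with `|R τ| ≤ M`, `|R' τ| ≤ M`) agree
after the cold-start phase (for all `τ > n₀`), then their EWP weighted means
differ by at most `2M·exp (-(t-n₀)/h)`. -/
theorem ewp_weighted_mean_cold_start_perturbation
    (h : ℝ) (hh : 0 < h) (t n₀ : ℕ) (ht : 1 ≤ t) (hn₀ : 1 ≤ n₀) (hn₀t : n₀ ≤ t)
    (M : ℝ) (hM : 0 ≤ M) (R R' : ℕ → ℝ)
    (hR : ∀ τ ∈ Finset.Icc 1 t, |R τ| ≤ M)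
    (hR' : ∀ τ ∈ Finset.Icc 1 t, |R' τ| ≤ M)
    (hagree : ∀ τ ∈ Finset.Icc 1 t, n₀ < τ → R τ = R' τ) :
    |(∑ τ ∈ Finset.Icc 1 t, Real.exp (-((t : ℝ) - (τ : ℝ)) / h) * R τ) /
        (∑ τ ∈ Finset.Icc 1 t, Real.exp (-((t : ℝ) - (τ : ℝ)) / h)) -
      (∑ τ ∈ Finset.Icc 1 t, Real.exp (-((t : ℝ) - (τ : ℝ)) / h) * R' τ) /
        (∑ τ ∈ Finset.Icc 1 t, Real.exp (-((t : ℝ) - (τ : ℝ)) / h))| ≤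
      2 * M * Real.exp (-((t : ℝ) - (n₀ : ℝ)) / h) := by
  set w : ℕ → ℝ := fun τ => Real.exp (-((t : ℝ) - (τ : ℝ)) / h) with hw
  have hwpos : ∀ τ, 0 < w τ := fun τ => Real.exp_pos _
  have hWpos : 0 < ∑ τ ∈ Finset.Icc 1 t, w τ :=
    Finset.sum_pos (fun τ _ => hwpos τ) ⟨1, Finset.mem_Icc.mpr ⟨le_refl 1, ht⟩⟩
  rw [div_sub_div_same, ← Finset.sum_sub_distrib, abs_div, abs_of_pos hWpos,
    div_le_iff₀ hWpos]
  -- the difference sum is supported on Icc 1 n₀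
  have hsupp : (∑ τ ∈ Finset.Icc 1 t, (w τ * R τ - w τ * R' τ)) =
      ∑ τ ∈ Finset.Icc 1 n₀, (w τ * R τ - w τ * R' τ) := by
    symm
    apply Finset.sum_subset (Finset.Icc_subset_Icc_right hn₀t)
    intro τ hτ hτ'
    have h1 : n₀ < τ := by
      simp only [Finset.mem_Icc] at hτ hτ'
      omega
    rw [hagree τ hτ h1]
    ring
  rw [hsupp]
  have key : (∑ τ ∈ Finset.Icc 1 n₀, w τ) ≤
      Real.exp (-((t : ℝ) - (n₀ : ℝ)) / h) * ∑ τ ∈ Finset.Icc 1 t, w τ := by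
    have step1 : (∑ τ ∈ Finset.Icc 1 n₀, w τ) =
        Real.exp (-((t : ℝ) - (n₀ : ℝ)) / h) *
          ∑ τ ∈ Finset.Icc 1 n₀, Real.exp (-((n₀ : ℝ) - (τ : ℝ)) / h) := by
      rw [Finset.mul_sum]
      apply Finset.sum_congr rfl
      intro τ _
      simp only [hw, ← Real.exp_add]
      congr 1
      ring
    rw [step1]
    apply mul_le_mul_of_nonneg_left _ (Real.exp_pos _).le
    -- reindex τ ↦ τ + (t - n₀)
    have reindex : (∑ τ ∈ Finset.Icc 1 n₀, Real.exp (-((n₀ : ℝ) - (τ : ℝ)) / h)) =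
        ∑ τ ∈ Finset.Icc (1 + (t - n₀)) (n₀ + (t - n₀)), w τ := by
      rw [← Finset.map_add_right_Icc, Finset.sum_map]
      apply Finset.sum_congr rfl
      intro τ hτ
      simp only [addRightEmbedding_apply, hw]
      congr 1
      have : ((τ + (t - n₀) : ℕ) : ℝ) = (τ : ℝ) + (t : ℝ) - (n₀ : ℝ) := by
        push_cast [Nat.cast_sub hn₀t]
        ring
      rw [this]
      ring
    rw [reindex]
    apply Finset.sum_le_sum_of_subset_of_nonneg
    · apply Finset.Icc_subset_Icc <;> omega
    · intro τ _ _
      exact (hwpos τ).le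
  calc |∑ τ ∈ Finset.Icc 1 n₀, (w τ * R τ - w τ * R' τ)|
      ≤ ∑ τ ∈ Finset.Icc 1 n₀, |w τ * R τ - w τ * R' τ| :=
        Finset.abs_sum_le_sum_abs _ _
    _ ≤ ∑ τ ∈ Finset.Icc 1 n₀, 2 * M * w τ := by
        apply Finset.sum_le_sum
        intro τ hτ
        have hτt : τ ∈ Finset.Icc 1 t :=
          Finset.Icc_subset_Icc_right hn₀t hτ
        have : |w τ * R τ - w τ * R' τ| = w τ * |R τ - R' τ| := by
          rw [← mul_sub, abs_mul, abs_of_pos (hwpos τ)]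
        rw [this]
        have hb : |R τ - R' τ| ≤ 2 * M := by
          calc |R τ - R' τ| ≤ |R τ| + |R' τ| := abs_sub _ _
            _ ≤ M + M := add_le_add (hR τ hτt) (hR' τ hτt)
            _ = 2 * M := by ring
        calc w τ * |R τ - R' τ| ≤ w τ * (2 * M) :=
              mul_le_mul_of_nonneg_left hb (hwpos τ).le
          _ = 2 * M * w τ := by ring
    _ = 2 * M * ∑ τ ∈ Finset.Icc 1 n₀, w τ := by rw [Finset.mul_sum]
    _ ≤ 2 * M * (Real.exp (-((t : ℝ) - (n₀ : ℝ)) / h) * ∑ τ ∈ Finset.Icc 1 t, w τ) := by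
        apply mul_le_mul_of_nonneg_left key
        linarith
    _ = 2 * M * Real.exp (-((t : ℝ) - (n₀ : ℝ)) / h) * ∑ τ ∈ Finset.Icc 1 t, w τ := by
        ring
end

section
/- Let Φ be any map assigning to each three-player cooperative game v (a real-valued function on subsets of {1,2,3} with v(∅) = 0) a vector Φ(v) ∈ ℝ³ such that Φ satisfies: (Efficiency) Φ₁(v) + Φ₂(v) + Φ₃(v) = v({1,2,3}) for all v; (Symmetry) if v(S ∪ {i}) = v(S ∪ {j}) for all S containing neither i nor j, then Φ_i(v) = Φ_j(v); (Dummy Player) if v(S ∪ {i}) = v(S) for all S not containing i, then Φ_i(v) = 0; and (Additivity) Φ(v + v') = Φ(v) + Φ(v') for all games v, v'. Then Φ_i(v) equals the closed-form three-player Shapley value φ_i(v) for every game v and every player i. -/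
/-- The closed-form three-player Shapley values of the game `v`
(players `0,1,2` standing for `1,2,3`):
`φ₁ = (1/3)v₁ + (1/6)(v₁₂ − v₂) + (1/6)(v₁₃ − v₃) + (1/3)(v₁₂₃ − v₂₃)`,
and analogously for `φ₂`, `φ₃` with indices permuted. -/
noncomputable def shapley3 (v : Finset (Fin 3) → ℝ) : Fin 3 → ℝ :=
  ![(1/3) * v {0} + (1/6) * (v {0, 1} - v {1}) + (1/6) * (v {0, 2} - v {2})
      + (1/3) * (v {0, 1, 2} - v {1, 2}),
    (1/3) * v {1} + (1/6) * (v {0, 1} - v {0}) + (1/6) * (v {1, 2} - v {2})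
      + (1/3) * (v {0, 1, 2} - v {0, 2}),
    (1/3) * v {2} + (1/6) * (v {0, 2} - v {0}) + (1/6) * (v {1, 2} - v {1})
      + (1/3) * (v {0, 1, 2} - v {0, 1})]

/-- Scaled unanimity game on coalition `T` with weight `c`. -/
noncomputable def uG (T : Finset (Fin 3)) (c : ℝ) : Finset (Fin 3) → ℝ :=
  fun S => if T ⊆ S then c else 0

lemma uG_empty (T : Finset (Fin 3)) (hT : T.Nonempty) (c : ℝ) : uG T c ∅ = 0 := by
  simp [uG, Finset.subset_empty, hT.ne_empty]

/-- The axioms force the value of `Φ` on a scaled unanimity game. -/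
lemma key_unanimity
    (Φ : (Finset (Fin 3) → ℝ) → Fin 3 → ℝ)
    (heff : ∀ v : Finset (Fin 3) → ℝ, v ∅ = 0 →
      Φ v 0 + Φ v 1 + Φ v 2 = v {0, 1, 2})
    (hsym : ∀ v : Finset (Fin 3) → ℝ, v ∅ = 0 → ∀ i j : Fin 3, i ≠ j →
      (∀ S : Finset (Fin 3), i ∉ S → j ∉ S → v (insert i S) = v (insert j S)) →
      Φ v i = Φ v j)
    (hdummy : ∀ v : Finset (Fin 3) → ℝ, v ∅ = 0 → ∀ i : Fin 3,
      (∀ S : Finset (Fin 3), i ∉ S → v (insert i S) = v S) → Φ v i = 0)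
    (T : Finset (Fin 3)) (hT : T.Nonempty) (c : ℝ) (j : Fin 3) :
    Φ (uG T c) j = if j ∈ T then c / T.card else 0 := by
  have hg0 : uG T c ∅ = 0 := uG_empty T hT c
  have hdum : ∀ k : Fin 3, k ∉ T → Φ (uG T c) k = 0 := by
    intro k hk
    apply hdummy _ hg0 k
    intro S hkS
    simp [uG, Finset.subset_insert_iff_of_notMem hk]
  by_cases hj : j ∈ T
  · have hall : ∀ k ∈ T, Φ (uG T c) k = Φ (uG T c) j := by
      intro k hk
      by_cases hkj : k = j
      · rw [hkj]
      · apply hsym _ hg0 k j hkj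
        intro S hkS hjS
        have h1 : ¬ T ⊆ insert k S := by
          intro h
          rcases Finset.mem_insert.mp (h hj) with h' | h'
          · exact hkj h'.symm
          · exact hjS h'
        have h2 : ¬ T ⊆ insert j S := by
          intro h
          rcases Finset.mem_insert.mp (h hk) with h' | h'
          · exact hkj h'
          · exact hkS h'
        simp [uG, h1, h2]
    have hsum : Φ (uG T c) 0 + Φ (uG T c) 1 + Φ (uG T c) 2 = c := by
      have h := heff _ hg0
      have hT3 : T ⊆ ({0,1,2} : Finset (Fin 3)) := by
        intro x _; fin_cases x <;> decide
      rwa [show uG T c {0,1,2} = c from by simp [uG, hT3]] at h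
    have hcard : (T.card : ℝ) ≠ 0 := by
      exact_mod_cast hT.card_pos.ne'
    have hTsum : ∑ k ∈ T, Φ (uG T c) k = (T.card : ℝ) * Φ (uG T c) j := by
      rw [Finset.sum_congr rfl hall, Finset.sum_const, nsmul_eq_mul]
    have huniv : ∑ k ∈ (Finset.univ : Finset (Fin 3)), Φ (uG T c) k
        = ∑ k ∈ T, Φ (uG T c) k := by
      symm
      refine Finset.sum_subset (Finset.subset_univ T) ?_
      intro k _ hk
      exact hdum k hk
    have hc : (T.card : ℝ) * Φ (uG T c) j = c := by
      rw [← hTsum, ← huniv, Fin.sum_univ_three, hsum]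
    rw [if_pos hj, eq_div_iff hcard]
    linear_combination hc
  · rw [if_neg hj]
    exact hdum j hj

/-- **Uniqueness of the three-player Shapley value.**
Any map `Φ` assigning to each three-player game `v` (with `v ∅ = 0`) a vector
in `ℝ³` that satisfies Efficiency, Symmetry, Dummy Player, and Additivity must
coincide with the closed-form three-player Shapley value on every such game. -/
theorem shapley3_unique
    (Φ : (Finset (Fin 3) → ℝ) → Fin 3 → ℝ)
    (heff : ∀ v : Finset (Fin 3) → ℝ, v ∅ = 0 →
      Φ v 0 + Φ v 1 + Φ v 2 = v {0, 1, 2})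
    (hsym : ∀ v : Finset (Fin 3) → ℝ, v ∅ = 0 → ∀ i j : Fin 3, i ≠ j →
      (∀ S : Finset (Fin 3), i ∉ S → j ∉ S → v (insert i S) = v (insert j S)) →
      Φ v i = Φ v j)
    (hdummy : ∀ v : Finset (Fin 3) → ℝ, v ∅ = 0 → ∀ i : Fin 3,
      (∀ S : Finset (Fin 3), i ∉ S → v (insert i S) = v S) → Φ v i = 0)
    (hadd : ∀ v v' : Finset (Fin 3) → ℝ, v ∅ = 0 → v' ∅ = 0 →
      ∀ i : Fin 3, Φ (fun S => v S + v' S) i = Φ v i + Φ v' i) :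
    ∀ v : Finset (Fin 3) → ℝ, v ∅ = 0 → ∀ i : Fin 3, Φ v i = shapley3 v i := by
  intro v hv i
  have key := key_unanimity Φ heff hsym hdummy
  set c1 := v {0} with hc1
  set c2 := v {1} with hc2
  set c3 := v {2} with hc3
  set c4 := v {0,1} - v {0} - v {1} with hc4
  set c5 := v {0,2} - v {0} - v {2} with hc5
  set c6 := v {1,2} - v {1} - v {2} with hc6
  set c7 := v {0,1,2} - v {0,1} - v {0,2} - v {1,2} + v {0} + v {1} + v {2} with hc7
  -- decomposition of `v` into scaled unanimity games
  have hdec : ∀ S, v S = uG {0} c1 S + (uG {1} c2 S + (uG {2} c3 S +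
      (uG {0,1} c4 S + (uG {0,2} c5 S + (uG {1,2} c6 S + uG {0,1,2} c7 S))))) := by
    intro S
    by_cases h0 : (0:Fin 3) ∈ S <;> by_cases h1 : (1:Fin 3) ∈ S <;>
      by_cases h2 : (2:Fin 3) ∈ S
    · have hS : S = ({0,1,2} : Finset (Fin 3)) := by ext x; fin_cases x <;> simp [h0, h1, h2]
      subst hS; simp (config := { decide := true }) [uG, hc1, hc2, hc3, hc4, hc5, hc6, hc7]
        <;> ring
    · have hS : S = ({0,1} : Finset (Fin 3)) := by ext x; fin_cases x <;> simp [h0, h1, h2]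
      subst hS; simp (config := { decide := true }) [uG, hc1, hc2, hc3, hc4, hc5, hc6, hc7]
        <;> ring
    · have hS : S = ({0,2} : Finset (Fin 3)) := by ext x; fin_cases x <;> simp [h0, h1, h2]
      subst hS; simp (config := { decide := true }) [uG, hc1, hc2, hc3, hc4, hc5, hc6, hc7]
        <;> ring
    · have hS : S = ({0} : Finset (Fin 3)) := by ext x; fin_cases x <;> simp [h0, h1, h2]
      subst hS; simp (config := { decide := true }) [uG, hc1, hc2, hc3, hc4, hc5, hc6, hc7]
        <;> ring
    · have hS : S = ({1,2} : Finset (Fin 3)) := by ext x; fin_cases x <;> simp [h0, h1, h2]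
      subst hS; simp (config := { decide := true }) [uG, hc1, hc2, hc3, hc4, hc5, hc6, hc7]
        <;> ring
    · have hS : S = ({1} : Finset (Fin 3)) := by ext x; fin_cases x <;> simp [h0, h1, h2]
      subst hS; simp (config := { decide := true }) [uG, hc1, hc2, hc3, hc4, hc5, hc6, hc7]
        <;> ring
    · have hS : S = ({2} : Finset (Fin 3)) := by ext x; fin_cases x <;> simp [h0, h1, h2]
      subst hS; simp (config := { decide := true }) [uG, hc1, hc2, hc3, hc4, hc5, hc6, hc7]
        <;> ring
    · have hS : S = (∅ : Finset (Fin 3)) := by ext x; fin_cases x <;> simp [h0, h1, h2]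
      subst hS; simp (config := { decide := true }) [uG, hv, hc1, hc2, hc3, hc4, hc5, hc6, hc7]
        <;> ring
  -- additivity chain
  have z7 : uG {0,1,2} c7 ∅ = 0 := uG_empty _ (by decide) _
  have z6 : uG {1,2} c6 ∅ = 0 := uG_empty _ (by decide) _
  have z5 : uG {0,2} c5 ∅ = 0 := uG_empty _ (by decide) _
  have z4 : uG {0,1} c4 ∅ = 0 := uG_empty _ (by decide) _
  have z3 : uG {2} c3 ∅ = 0 := uG_empty _ (by decide) _
  have z2 : uG {1} c2 ∅ = 0 := uG_empty _ (by decide) _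
  have z1 : uG {0} c1 ∅ = 0 := uG_empty _ (by decide) _
  have s6 : Φ (fun S => uG {1,2} c6 S + uG {0,1,2} c7 S) i
      = Φ (uG {1,2} c6) i + Φ (uG {0,1,2} c7) i := hadd _ _ z6 z7 i
  have r6 : (fun S => uG {1,2} c6 S + uG {0,1,2} c7 S) (∅ : Finset (Fin 3)) = 0 := by
    simp [z6, z7]
  have s5 : Φ (fun S => uG {0,2} c5 S + (uG {1,2} c6 S + uG {0,1,2} c7 S)) i
      = Φ (uG {0,2} c5) i + (Φ (uG {1,2} c6) i + Φ (uG {0,1,2} c7) i) := by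
    have h := hadd (uG {0,2} c5) (fun S => uG {1,2} c6 S + uG {0,1,2} c7 S) z5 r6 i
    rw [s6] at h
    exact h
  have r5 : (fun S => uG {0,2} c5 S + (uG {1,2} c6 S + uG {0,1,2} c7 S))
      (∅ : Finset (Fin 3)) = 0 := by simp [z5, z6, z7]
  have s4 : Φ (fun S => uG {0,1} c4 S + (uG {0,2} c5 S + (uG {1,2} c6 S + uG {0,1,2} c7 S))) i
      = Φ (uG {0,1} c4) i + (Φ (uG {0,2} c5) i + (Φ (uG {1,2} c6) i + Φ (uG {0,1,2} c7) i)) := by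
    have h := hadd (uG {0,1} c4)
      (fun S => uG {0,2} c5 S + (uG {1,2} c6 S + uG {0,1,2} c7 S)) z4 r5 i
    rw [s5] at h
    exact h
  have r4 : (fun S => uG {0,1} c4 S + (uG {0,2} c5 S + (uG {1,2} c6 S + uG {0,1,2} c7 S)))
      (∅ : Finset (Fin 3)) = 0 := by simp [z4, z5, z6, z7]
  have s3 : Φ (fun S => uG {2} c3 S +
        (uG {0,1} c4 S + (uG {0,2} c5 S + (uG {1,2} c6 S + uG {0,1,2} c7 S)))) i
      = Φ (uG {2} c3) i + (Φ (uG {0,1} c4) i +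
        (Φ (uG {0,2} c5) i + (Φ (uG {1,2} c6) i + Φ (uG {0,1,2} c7) i))) := by
    have h := hadd (uG {2} c3)
      (fun S => uG {0,1} c4 S + (uG {0,2} c5 S + (uG {1,2} c6 S + uG {0,1,2} c7 S))) z3 r4 i
    rw [s4] at h
    exact h
  have r3 : (fun S => uG {2} c3 S +
      (uG {0,1} c4 S + (uG {0,2} c5 S + (uG {1,2} c6 S + uG {0,1,2} c7 S))))
      (∅ : Finset (Fin 3)) = 0 := by simp [z3, z4, z5, z6, z7]
  have s2 : Φ (fun S => uG {1} c2 S + (uG {2} c3 S +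
        (uG {0,1} c4 S + (uG {0,2} c5 S + (uG {1,2} c6 S + uG {0,1,2} c7 S))))) i
      = Φ (uG {1} c2) i + (Φ (uG {2} c3) i + (Φ (uG {0,1} c4) i +
        (Φ (uG {0,2} c5) i + (Φ (uG {1,2} c6) i + Φ (uG {0,1,2} c7) i)))) := by
    have h := hadd (uG {1} c2)
      (fun S => uG {2} c3 S +
        (uG {0,1} c4 S + (uG {0,2} c5 S + (uG {1,2} c6 S + uG {0,1,2} c7 S)))) z2 r3 i
    rw [s3] at h
    exact h
  have r2 : (fun S => uG {1} c2 S + (uG {2} c3 S +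
      (uG {0,1} c4 S + (uG {0,2} c5 S + (uG {1,2} c6 S + uG {0,1,2} c7 S)))))
      (∅ : Finset (Fin 3)) = 0 := by simp [z2, z3, z4, z5, z6, z7]
  have s1 : Φ (fun S => uG {0} c1 S + (uG {1} c2 S + (uG {2} c3 S +
        (uG {0,1} c4 S + (uG {0,2} c5 S + (uG {1,2} c6 S + uG {0,1,2} c7 S)))))) i
      = Φ (uG {0} c1) i + (Φ (uG {1} c2) i + (Φ (uG {2} c3) i + (Φ (uG {0,1} c4) i +
        (Φ (uG {0,2} c5) i + (Φ (uG {1,2} c6) i + Φ (uG {0,1,2} c7) i))))) := by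
    have h := hadd (uG {0} c1)
      (fun S => uG {1} c2 S + (uG {2} c3 S +
        (uG {0,1} c4 S + (uG {0,2} c5 S + (uG {1,2} c6 S + uG {0,1,2} c7 S))))) z1 r2 i
    rw [s2] at h
    exact h
  have hveq : v = fun S => uG {0} c1 S + (uG {1} c2 S + (uG {2} c3 S +
      (uG {0,1} c4 S + (uG {0,2} c5 S + (uG {1,2} c6 S + uG {0,1,2} c7 S))))) :=
    funext hdec
  have hΦ : Φ v i = Φ (uG {0} c1) i + (Φ (uG {1} c2) i + (Φ (uG {2} c3) i + (Φ (uG {0,1} c4) i +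
      (Φ (uG {0,2} c5) i + (Φ (uG {1,2} c6) i + Φ (uG {0,1,2} c7) i))))) := by
    rw [hveq]; exact s1
  rw [hΦ,
    key {0} (by decide) c1 i, key {1} (by decide) c2 i, key {2} (by decide) c3 i,
    key {0,1} (by decide) c4 i, key {0,2} (by decide) c5 i, key {1,2} (by decide) c6 i,
    key {0,1,2} (by decide) c7 i]
  fin_cases i <;>
    simp (config := { decide := true }) [shapley3, hc1, hc2, hc3, hc4, hc5, hc6, hc7] <;>
    ring
end
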